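/- arXiv:2008.13042 — 2 statements merged into one kernel-verified Lean document; each statement's English description precedes it below -/
import Mathlib

section
/- Let f_R(r₀; Δ, μ, Σ₀) = (2π)^{-k} |Σ₀|^{-1/2} exp{-½ (vec(r₀) - a_Δ ⊗ μ)' Σ₀^{-1} (vec(r₀) - a_Δ ⊗ μ)} be the density of a k×2 Gaussian matrix R₀ with mean μ a_Δ' and vectorized covariance Σ₀. For g = (g₁, g₂) with g₁ invertible k×k and g₂ invertible lower-triangular 2×2, define the transformed data g∘r₀ = g₁ r₀ g₂' and transformed parameters g∘(Δ, μ, Σ₀) = (Δg₁₁/(Δg₂₁+g₂₂), g₁μ(Δg₂₁+g₂₂), (g₂⊗g₁)Σ₀(g₂'⊗g₁')). Then f_R(r₀; Δ, μ, Σ₀) = f_R(g∘r₀; g∘(Δ, μ, Σ₀)) · |g₁|² · |g₂|^k. -/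
open Matrix Kronecker Real

variable {k : ℕ}

/-- `vec` of a `k×2` matrix: stacks the two columns, indexed by `Fin 2 × Fin k`. -/
def vecCol (r : Matrix (Fin k) (Fin 2) ℝ) : Fin 2 × Fin k → ℝ := fun p => r p.2 p.1

/-- The Gaussian density of the `k×2` matrix `R₀` with mean `μ a_Δ'` and
vectorized covariance `Σ₀`. -/
noncomputable def gaussDensity (k : ℕ) (r : Matrix (Fin k) (Fin 2) ℝ)
    (Δ : ℝ) (μ : Fin k → ℝ) (Sig : Matrix (Fin 2 × Fin k) (Fin 2 × Fin k) ℝ) : ℝ :=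
  (2 * π) ^ (-(k : ℝ)) * Sig.det ^ (-(1/2) : ℝ) *
    Real.exp (-(1/2) * ((vecCol r - fun p => ![Δ, 1] p.1 * μ p.2) ⬝ᵥ
      (Sig⁻¹ *ᵥ (vecCol r - fun p => ![Δ, 1] p.1 * μ p.2))))

lemma quad_inv {I : Type*} [Fintype I] [DecidableEq I]
    (G S : Matrix I I ℝ) (hG : IsUnit G.det) (x : I → ℝ) :
    (G *ᵥ x) ⬝ᵥ ((G * S * Gᵀ)⁻¹ *ᵥ (G *ᵥ x)) = x ⬝ᵥ (S⁻¹ *ᵥ x) := by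
  rw [Matrix.mul_inv_rev, Matrix.mul_inv_rev, ← Matrix.transpose_nonsing_inv,
    ← Matrix.mulVec_mulVec, ← Matrix.mulVec_mulVec, Matrix.mulVec_mulVec x G⁻¹ G,
    Matrix.nonsing_inv_mul _ hG, Matrix.one_mulVec,
    Matrix.dotProduct_mulVec (G *ᵥ x) (G⁻¹ᵀ), Matrix.vecMul_transpose,
    Matrix.mulVec_mulVec, Matrix.nonsing_inv_mul _ hG, Matrix.one_mulVec]

lemma vecCol_conj (g₁ : Matrix (Fin k) (Fin k) ℝ) (g₂ : Matrix (Fin 2) (Fin 2) ℝ)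
    (r : Matrix (Fin k) (Fin 2) ℝ) :
    vecCol (g₁ * r * g₂ᵀ) = (g₂ ⊗ₖ g₁) *ᵥ vecCol r := by
  funext p
  simp only [vecCol, Matrix.mulVec, Matrix.mul_apply, dotProduct,
    Matrix.transpose_apply, kroneckerMap_apply, Fintype.sum_prod_type,
    Finset.sum_mul, Finset.mul_sum]
  apply Finset.sum_congr rfl
  intro x _
  apply Finset.sum_congr rfl
  intro y _
  ring

lemma mean_conj (Δ g11 g21 g22 : ℝ) (hden : Δ * g21 + g22 ≠ 0)
    (g₁ : Matrix (Fin k) (Fin k) ℝ) (μ : Fin k → ℝ) :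
    (fun p : Fin 2 × Fin k => ![Δ * g11 / (Δ * g21 + g22), 1] p.1 *
        ((Δ * g21 + g22) • (g₁ *ᵥ μ)) p.2)
      = (!![g11, 0; g21, g22] ⊗ₖ g₁) *ᵥ (fun p => ![Δ, 1] p.1 * μ p.2) := by
  funext p
  obtain ⟨j, i⟩ := p
  fin_cases j
  · simp only [Matrix.mulVec, dotProduct, kroneckerMap_apply, Fintype.sum_prod_type,
      Pi.smul_apply, smul_eq_mul, Fin.sum_univ_two]
    simp [Matrix.mulVec, dotProduct, Finset.mul_sum, Finset.sum_mul]
    exact Finset.sum_congr rfl fun i' _ => by field_simp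
  · simp only [Matrix.mulVec, dotProduct, kroneckerMap_apply, Fintype.sum_prod_type,
      Pi.smul_apply, smul_eq_mul, Fin.sum_univ_two]
    simp [Matrix.mulVec, dotProduct, Finset.mul_sum, Finset.sum_mul]
    rw [← Finset.sum_add_distrib]
    exact Finset.sum_congr rfl fun i' _ => by ring

/-- The Gaussian density is relatively invariant with multiplier `|g₁|² |g₂|^k` under the
group action `r₀ ↦ g₁ r₀ g₂'`, `(Δ, μ, Σ₀) ↦ (Δg₁₁/(Δg₂₁+g₂₂), (Δg₂₁+g₂₂)g₁μ,
(g₂⊗g₁)Σ₀(g₂'⊗g₁'))`. -/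
theorem gaussDensity_relatively_invariant (k : ℕ)
    (r : Matrix (Fin k) (Fin 2) ℝ) (Δ : ℝ) (μ : Fin k → ℝ)
    (Sig : Matrix (Fin 2 × Fin k) (Fin 2 × Fin k) ℝ) (hSig : Sig.PosDef)
    (g₁ : Matrix (Fin k) (Fin k) ℝ) (hg₁ : IsUnit g₁.det)
    (g11 g21 g22 : ℝ) (hg11 : g11 ≠ 0) (hg22 : g22 ≠ 0)
    (hden : Δ * g21 + g22 ≠ 0)
    (g₂ : Matrix (Fin 2) (Fin 2) ℝ) (hg₂ : g₂ = !![g11, 0; g21, g22]) :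
    gaussDensity k r Δ μ Sig
      = gaussDensity k (g₁ * r * g₂ᵀ)
          (Δ * g11 / (Δ * g21 + g22))
          ((Δ * g21 + g22) • (g₁ *ᵥ μ))
          ((g₂ ⊗ₖ g₁) * Sig * (g₂ᵀ ⊗ₖ g₁ᵀ))
        * g₁.det ^ 2 * |g₂.det| ^ k := by
  have hg₂det : g₂.det = g11 * g22 := by subst hg₂; simp [Matrix.det_fin_two_of]
  have hg₂det0 : g₂.det ≠ 0 := by rw [hg₂det]; exact mul_ne_zero hg11 hg22
  have hg₁det0 : g₁.det ≠ 0 := hg₁.ne_zero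
  set G := g₂ ⊗ₖ g₁ with hGdef
  have hGdet : G.det = g₂.det ^ k * g₁.det ^ 2 := by
    rw [hGdef, Matrix.det_kronecker]; simp
  have hGdet0 : G.det ≠ 0 := by
    rw [hGdet]; exact mul_ne_zero (pow_ne_zero _ hg₂det0) (pow_ne_zero _ hg₁det0)
  have hGU : IsUnit G.det := isUnit_iff_ne_zero.mpr hGdet0
  have hT : g₂ᵀ ⊗ₖ g₁ᵀ = Gᵀ := kroneckerMap_transpose _ _ _
  -- vector identity
  set x : Fin 2 × Fin k → ℝ := vecCol r - fun p => ![Δ, 1] p.1 * μ p.2 with hxdef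
  have hvec : (vecCol (g₁ * r * g₂ᵀ) -
      fun p => ![Δ * g11 / (Δ * g21 + g22), 1] p.1 *
        ((Δ * g21 + g22) • (g₁ *ᵥ μ)) p.2) = G *ᵥ x := by
    rw [hxdef, Matrix.mulVec_sub, vecCol_conj, hGdef]
    congr 1
    rw [hg₂]
    exact mean_conj Δ g11 g21 g22 hden g₁ μ
  -- determinant identity
  have hNd : (G * Sig * Gᵀ).det = G.det ^ 2 * Sig.det := by
    rw [Matrix.det_mul, Matrix.det_mul, Matrix.det_transpose]; ring
  have hd : (0:ℝ) < Sig.det := hSig.det_pos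
  have habs : |G.det| = |g₂.det| ^ k * g₁.det ^ 2 := by
    rw [hGdet, abs_mul, abs_pow, abs_pow, sq_abs]
  have hpow1 : |G.det| ^ ((2:ℕ) * (-(1/2) : ℝ)) = |G.det|⁻¹ := by
    rw [show ((2:ℕ):ℝ) * (-(1/2):ℝ) = -1 by norm_num, Real.rpow_neg_one]
  have hrpow : (G * Sig * Gᵀ).det ^ (-(1/2) : ℝ) *
      (g₁.det ^ 2 * |g₂.det| ^ k) = Sig.det ^ (-(1/2) : ℝ) := by
    rw [hNd, Real.mul_rpow (sq_nonneg _) hd.le, ← sq_abs, ← Real.rpow_natCast |G.det| 2,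
      ← Real.rpow_mul (abs_nonneg _), hpow1, habs]
    have h1 : (|g₂.det| ^ k * g₁.det ^ 2) ≠ 0 := by
      rw [← habs]; exact abs_ne_zero.mpr hGdet0
    field_simp
  unfold gaussDensity
  rw [hvec, hT, quad_inv G Sig hGU x, ← hxdef, ← hrpow]
  ring
end

section
/- Let [S:T] be a k×2 matrix and consider the joint action of g₁ ∈ GL(k) on data (R₀, Ω₀, Φ) (Kronecker covariance Σ₀ = Ω₀ ⊗ Φ, Φ known but transforming as g₁Φg₁') together with the sign action of g₂ on (S,T) given by (S,T) ↦ (sgn(g₁₁)S, sgn(g₂₂)T). Then the triple (Q_S, Q_T, Q_{ST}²) = (S'S, T'T, (S'T)²) is a maximal invariant: (S,T) and (S̃,T̃) lie in the same orbit if and only if S'S = S̃'S̃, T'T = T̃'T̃, and (S'T)² = (S̃'T̃)². -/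
/-!
Orthogonal matrices preserve dot products and the signs square away, so the triple is invariant.
Conversely, replacing `T̃` by `±T̃` makes `S'T = S̃'T̃`; the pairs `(S, T)` and `(S̃, ±T̃)` then have
the same Gram matrix, and any two such pairs are related by an orthogonal map.
-/

open Matrix
open scoped RealInnerProductSpace

/-- Two reflections suffice: the first moves `u` to `u'`, and the second, in the hyperplane
orthogonal to `r v - v'`, fixes `u'` because `⟪u', r v⟫ = ⟪u, v⟫ = ⟪u', v'⟫`. -/
theorem exists_linearIsometryEquiv_map_pair {E : Type*} [NormedAddCommGroup E]
    [InnerProductSpace ℝ E] {u v u' v' : E} (huu : ‖u‖ = ‖u'‖) (hvv : ‖v‖ = ‖v'‖)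
    (huv : ⟪u, v⟫ = ⟪u', v'⟫) : ∃ f : E ≃ₗᵢ[ℝ] E, f u = u' ∧ f v = v' := by
  set r := Submodule.reflection (ℝ ∙ (u - u'))ᗮ
  have hru : r u = u' := Submodule.reflection_sub huu
  have hrv : ‖r v‖ = ‖v'‖ := by rw [LinearIsometryEquiv.norm_map, hvv]
  set r' := Submodule.reflection (ℝ ∙ (r v - v'))ᗮ
  have hr'u' : r' u' = u' := by
    apply Submodule.reflection_mem_subspace_eq_self
    rw [Submodule.mem_orthogonal_singleton_iff_inner_left, inner_sub_right, ← hru,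
      LinearIsometryEquiv.inner_map_map, hru, huv, sub_self]
  exact ⟨r.trans r', by simp [hru, hr'u'], Submodule.reflection_sub hrv⟩

theorem dotProduct_mulVec_mulVec_of_transpose_mul_self {n R : Type*} [Fintype n]
    [DecidableEq n] [CommSemiring R] {M : Matrix n n R} (hM : Mᵀ * M = 1) (x y : n → R) :
    M *ᵥ x ⬝ᵥ M *ᵥ y = x ⬝ᵥ y := by
  rw [dotProduct_mulVec, ← vecMul_transpose, vecMul_vecMul, hM, vecMul_one]

theorem LinearIsometryEquiv.exists_orthogonal_matrix_mulVec_eq {n : Type*} [Fintype n]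
    [DecidableEq n] (f : EuclideanSpace ℝ n ≃ₗᵢ[ℝ] EuclideanSpace ℝ n) :
    ∃ M : Matrix n n ℝ, Mᵀ * M = 1 ∧ ∀ x, M *ᵥ x = (f (WithLp.toLp 2 x)).ofLp := by
  set b := (EuclideanSpace.basisFun n ℝ).toBasis
  set M := LinearMap.toMatrix b b f.toLinearMap
  have hMf : toEuclideanLin M = f.toLinearMap := toLin_toMatrix b b _
  refine ⟨M, (mem_orthogonalGroup_iff' (A := M)).mp (f.toMatrix_mem_unitaryGroup _ _),
    fun x => ?_⟩
  rw [← LinearIsometryEquiv.coe_toLinearEquiv, ← LinearEquiv.coe_coe, ← hMf]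
  rfl

theorem exists_orthogonal_mulVec_pair_eq_of_dotProduct_eq {n : Type*} [Fintype n] [DecidableEq n]
    {u v u' v' : n → ℝ} (huu : u ⬝ᵥ u = u' ⬝ᵥ u') (hvv : v ⬝ᵥ v = v' ⬝ᵥ v')
    (huv : u ⬝ᵥ v = u' ⬝ᵥ v') :
    ∃ M : Matrix n n ℝ, Mᵀ * M = 1 ∧ M *ᵥ u = u' ∧ M *ᵥ v = v' := by
  have inner_toLp (x y : n → ℝ) : ⟪WithLp.toLp 2 x, WithLp.toLp 2 y⟫ = x ⬝ᵥ y := by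
    rw [EuclideanSpace.inner_toLp_toLp, star_trivial, dotProduct_comm]
  have norm_toLp_eq {x y : n → ℝ} (h : x ⬝ᵥ x = y ⬝ᵥ y) :
      ‖WithLp.toLp 2 x‖ = ‖WithLp.toLp 2 y‖ := by
    rw [norm_eq_sqrt_real_inner, norm_eq_sqrt_real_inner, inner_toLp, inner_toLp, h]
  obtain ⟨f, hfu, hfv⟩ := exists_linearIsometryEquiv_map_pair (norm_toLp_eq huu)
    (norm_toLp_eq hvv) (by rwa [inner_toLp, inner_toLp])
  obtain ⟨M, hM, hMf⟩ := f.exists_orthogonal_matrix_mulVec_eq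
  exact ⟨M, hM, by rw [hMf, hfu], by rw [hMf, hfv]⟩

theorem sign_orthogonal_maximal_invariant_general (k : ℕ)
    (S T Stil Ttil : Fin k → ℝ) :
    (∃ (h : Matrix (Fin k) (Fin k) ℝ) (ε₁ ε₂ : ℝ), hᵀ * h = 1 ∧
        (ε₁ = 1 ∨ ε₁ = -1) ∧ (ε₂ = 1 ∨ ε₂ = -1) ∧
        Stil = ε₁ • (h *ᵥ S) ∧ Ttil = ε₂ • (h *ᵥ T))
      ↔ (S ⬝ᵥ S = Stil ⬝ᵥ Stil ∧ T ⬝ᵥ T = Ttil ⬝ᵥ Ttil ∧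
          (S ⬝ᵥ T) ^ 2 = (Stil ⬝ᵥ Ttil) ^ 2) := by
  constructor
  · rintro ⟨h, ε₁, ε₂, hh, hε₁, hε₂, rfl, rfl⟩
    have hε₁₁ : ε₁ * ε₁ = 1 := mul_self_eq_one_iff.mpr hε₁
    have hε₂₂ : ε₂ * ε₂ = 1 := mul_self_eq_one_iff.mpr hε₂
    simp only [smul_dotProduct, dotProduct_smul, dotProduct_mulVec_mulVec_of_transpose_mul_self hh,
      smul_eq_mul]
    refine ⟨?_, ?_, ?_⟩
    · linear_combination -(S ⬝ᵥ S) * hε₁₁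
    · linear_combination -(T ⬝ᵥ T) * hε₂₂
    · linear_combination -(S ⬝ᵥ T) ^ 2 * (ε₂ ^ 2 * hε₁₁ + hε₂₂)
  · rintro ⟨hSS, hTT, hST⟩
    obtain ⟨ε, hε, hST'⟩ : ∃ ε : ℝ, (ε = 1 ∨ ε = -1) ∧ S ⬝ᵥ T = Stil ⬝ᵥ (ε • Ttil) := by
      rcases sq_eq_sq_iff_eq_or_eq_neg.mp hST with h | h
      · exact ⟨1, .inl rfl, by rw [one_smul, h]⟩
      · exact ⟨-1, .inr rfl, by rw [neg_one_smul, dotProduct_neg, h]⟩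
    have hεε : ε * ε = 1 := mul_self_eq_one_iff.mpr hε
    obtain ⟨M, hM, hMS, hMT⟩ := exists_orthogonal_mulVec_pair_eq_of_dotProduct_eq hSS
      (by rw [smul_dotProduct, dotProduct_smul, smul_smul, hεε, one_smul, hTT]) hST'
    exact ⟨M, 1, ε, hM, .inl rfl, hε, by rw [hMS, one_smul], by rw [hMT, smul_smul, hεε, one_smul]⟩

/-- `(Q_S, Q_T, Q_{ST}²) = (S'S, T'T, (S'T)²)` is a maximal invariant for the group generated
by joint orthogonal rotations `(S,T) ↦ (hS, hT)` and independent sign changes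
`(S,T) ↦ (ε₁S, ε₂T)`, `ε₁, ε₂ ∈ {−1,+1}`: two pairs lie in the same orbit iff
`S'S = S̃'S̃`, `T'T = T̃'T̃`, and `(S'T)² = (S̃'T̃)²`. -/
theorem sign_orthogonal_maximal_invariant (k : ℕ) (hk : 2 ≤ k)
    (S T Stil Ttil : Fin k → ℝ) :
    (∃ (h : Matrix (Fin k) (Fin k) ℝ) (ε₁ ε₂ : ℝ), hᵀ * h = 1 ∧
        (ε₁ = 1 ∨ ε₁ = -1) ∧ (ε₂ = 1 ∨ ε₂ = -1) ∧
        Stil = ε₁ • (h *ᵥ S) ∧ Ttil = ε₂ • (h *ᵥ T))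
      ↔ (S ⬝ᵥ S = Stil ⬝ᵥ Stil ∧ T ⬝ᵥ T = Ttil ⬝ᵥ Ttil ∧
          (S ⬝ᵥ T) ^ 2 = (Stil ⬝ᵥ Ttil) ^ 2) :=
  sign_orthogonal_maximal_invariant_general k S T Stil Ttil
end
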